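/- arXiv:0901.4819 — 2 statements merged into one kernel-verified Lean document; each statement's English description precedes it below -/
import Mathlib

section
/- Every nonzero R-submodule M of L has a Gröbner basis; that is, there exists a finite subset G of M∖{0} with Lt(G) = Lt(M). -/
open MvPolynomial

/-- The set `𝕏ₑ` of monomials (power products) of the free module `L`:
a pair of a monomial exponent of `R = A[x₁,…,xₙ]` and a basis index. -/
abbrev Mon (n r : ℕ) := (Fin n →₀ ℕ) × Fin r

/-- The free module `L = R e₁ ⊕ ⋯ ⊕ R e_r` over `R = A[x₁,…,xₙ]`. -/
abbrev Lmod (A : Type*) [CommRing A] (n r : ℕ) := Fin r → MvPolynomial (Fin n) A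

variable {A B : Type*} [CommRing A] [CommRing B] {n r : ℕ}

/-- The coefficient of `f ∈ L` at the monomial `X ∈ 𝕏ₑ`. -/
def coeffL (f : Lmod A n r) (X : Mon n r) : A := MvPolynomial.coeff X.1 (f X.2)

/-- The element `c·X` of `L`, for a monomial `X ∈ 𝕏ₑ` and `c ∈ A`. -/
noncomputable def monL (X : Mon n r) (c : A) : Lmod A n r :=
  Pi.single X.2 (MvPolynomial.monomial X.1 c)

open Classical in
/-- The (finite) set of monomials appearing in `f ∈ L` with nonzero coefficient. -/
noncomputable def suppL (f : Lmod A n r) : Finset (Mon n r) :=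
  Finset.univ.biUnion fun l => (f l).support.image fun d => (d, l)

/-- Multiplication of a monomial `𝐱 ∈ 𝕏` of `R` with a monomial `X ∈ 𝕏ₑ` of `L`. -/
noncomputable def mulMon (x : Fin n →₀ ℕ) (X : Mon n r) : Mon n r := (x + X.1, X.2)

/-- `X ∣ Y` for monomials of `L` : `Y = 𝐱 X` for some monomial `𝐱` of `R`. -/
def MonDvd (X Y : Mon n r) : Prop := ∃ x : Fin n →₀ ℕ, Y = mulMon x X

/-- A term order on `𝕏ₑ`: a (linear) order such that (1) `X < 𝐱X` for `𝐱 ≠ 1`, and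
(2) `X < Y → 𝐱X < 𝐱Y`. -/
def IsTermOrder (n r : ℕ) [LinearOrder (Mon n r)] : Prop :=
  (∀ (X : Mon n r) (x : Fin n →₀ ℕ), x ≠ 0 → X < mulMon x X) ∧
  (∀ (X Y : Mon n r) (x : Fin n →₀ ℕ), X < Y → mulMon x X < mulMon x Y)

section Order
variable [LinearOrder (Mon n r)]

/-- The leading power product `lp f` of `f ∈ L` (with value `⊥` for `f = 0`). -/
noncomputable def lpW (f : Lmod A n r) : WithBot (Mon n r) := (suppL f).max

/-- The leading coefficient `lc f` of `f ∈ L` (with junk value `0` for `f = 0`). -/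
noncomputable def lcL (f : Lmod A n r) : A :=
  if h : (suppL f).Nonempty then coeffL f ((suppL f).max' h) else 0

/-- The leading term `lt f` of `f ∈ L` (with value `0` for `f = 0`). -/
noncomputable def ltL (f : Lmod A n r) : Lmod A n r :=
  if h : (suppL f).Nonempty then monL ((suppL f).max' h) (lcL f) else 0

/-- `Lt S` : the `R`-submodule of `L` generated by the leading terms of the
nonzero elements of `S`. -/
noncomputable def LtS (S : Set (Lmod A n r)) :
    Submodule (MvPolynomial (Fin n) A) (Lmod A n r) :=
  Submodule.span (MvPolynomial (Fin n) A) (ltL '' {f ∈ S | f ≠ 0})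

/-- `lp g` divides the monomial `X`. -/
def lpDvdMon (g : Lmod A n r) (X : Mon n r) : Prop :=
  ∃ Y : Mon n r, lpW g = (Y : WithBot (Mon n r)) ∧ MonDvd Y X

/-- `lp g` divides `lp f`. -/
def lpDvd (g f : Lmod A n r) : Prop :=
  ∃ Y Z : Mon n r, lpW g = (Y : WithBot (Mon n r)) ∧ lpW f = (Z : WithBot (Mon n r)) ∧
    MonDvd Y Z

/-- One reduction step `f →_F h`. -/
def Step (F : Finset (Lmod A n r)) (f h : Lmod A n r) : Prop :=
  ∃ (a : Lmod A n r → A) (x : Lmod A n r → (Fin n →₀ ℕ)),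
    h = f - ∑ g ∈ F, a g • ((MvPolynomial.monomial (x g) (1 : A)) • g) ∧
    (∀ g ∈ F, a g ≠ 0 → lpW f = (lpW g).map (mulMon (x g))) ∧
    ltL f = ∑ g ∈ F, a g • ((MvPolynomial.monomial (x g) (1 : A)) • ltL g)

/-- `f ⇒_F h` : `f` reduces to `h` modulo `F` (a finite chain of reduction steps). -/
def Red (F : Finset (Lmod A n r)) : Lmod A n r → Lmod A n r → Prop :=
  Relation.TransGen (Step F)

/-- `f` reduces strictly to `h` modulo `F` : `f ⇒_F h` and `lp h < lp f`. -/
def StrictRed (F : Finset (Lmod A n r)) (f h : Lmod A n r) : Prop :=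
  Red F f h ∧ lpW h < lpW f

/-- `G` is a Gröbner basis for `M` : a finite subset of `M ∖ {0}` with
`Lt G = Lt M`. -/
def IsGB (G : Finset (Lmod A n r))
    (M : Submodule (MvPolynomial (Fin n) A) (Lmod A n r)) : Prop :=
  (G : Set (Lmod A n r)) ⊆ (M : Set (Lmod A n r)) \ {0} ∧
  LtS (G : Set (Lmod A n r)) = LtS (M : Set (Lmod A n r))

open Classical in
/-- A Gröbner basis `G` is minimal if no `g ∈ G` can be strictly reduced with
respect to `G ∖ {g}`. -/
noncomputable def IsMinimalGB (G : Finset (Lmod A n r)) : Prop :=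
  ∀ g ∈ G, ¬ ∃ h : Lmod A n r, StrictRed (G.erase g) g h

/-- The set `T_G` of totally reduced vectors, relative to a choice of coset
representatives `C X ⊆ A` and of lifts `X̃ = til X`. -/
def TGset (C : Mon n r → Set A) (til : Mon n r → Lmod A n r) : Set (Lmod A n r) :=
  {f | ∃ coef : Mon n r →₀ A, (∀ X, coef X ∈ C X) ∧ f = coef.sum fun X c => c • til X}

end Order

section Graded
variable {𝕜 : Type*} [CommSemiring 𝕜] [Algebra 𝕜 A]

/-- `A = ⊕_{0 ≤ i < a} A_i` is a graded tdvr of length `a` with distinguished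
element `ϖ ∈ A_1` : each `A_i` (`i < a`) is a one-dimensional `𝕜`-vector space
generated by `ϖ^i`, and `A_i = 0` for `i ≥ a`. -/
def IsGradedTdvr (𝒜 : ℕ → Submodule 𝕜 A) (a : ℕ∞) (ϖ : A) : Prop :=
  1 ≤ a ∧ ϖ ∈ 𝒜 1 ∧
  (∀ i : ℕ, (i : ℕ∞) < a → (ϖ ^ i ≠ 0 ∧ 𝒜 i = Submodule.span 𝕜 {ϖ ^ i})) ∧
  (∀ i : ℕ, a ≤ (i : ℕ∞) → 𝒜 i = ⊥)

open Classical in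
/-- The valuation of the graded tdvr `A` of length `a` : the smallest degree in
which `x` has a nonzero component, and `a` for `x = 0`. -/
noncomputable def valA (𝒜 : ℕ → Submodule 𝕜 A) [GradedAlgebra 𝒜] (a : ℕ∞) (x : A) : ℕ∞ :=
  if x = 0 then a
  else sInf {m : ℕ∞ | ∃ i : ℕ, (i : ℕ∞) = m ∧ (DirectSum.decompose 𝒜 x i : A) ≠ 0}

/-- `f ∈ L` is homogeneous of degree `i` (i.e. `f ∈ L_i`): all its coefficients
lie in `A_i`. -/
def HomogL (𝒜 : ℕ → Submodule 𝕜 A) (i : ℕ) (f : Lmod A n r) : Prop :=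
  ∀ X : Mon n r, coeffL f X ∈ 𝒜 i

/-- The degree-`i` part of `f ∈ L`, taken coefficientwise. -/
noncomputable def compL (𝒜 : ℕ → Submodule 𝕜 A) [GradedAlgebra 𝒜] (i : ℕ)
    (f : Lmod A n r) : Lmod A n r := fun l =>
  ∑ d ∈ (f l).support,
    MvPolynomial.monomial d ((DirectSum.decompose 𝒜 (MvPolynomial.coeff d (f l)) i : A))

/-- `M` is a graded submodule of `L` : it contains the homogeneous components of
each of its elements. -/
def IsGradedSub (𝒜 : ℕ → Submodule 𝕜 A) [GradedAlgebra 𝒜]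
    (M : Submodule (MvPolynomial (Fin n) A) (Lmod A n r)) : Prop :=
  ∀ f ∈ M, ∀ i : ℕ, compL 𝒜 i f ∈ M

/-- `A^{<m} = ⊕_{0 ≤ i < m} A_i`. -/
def Aless (𝒜 : ℕ → Submodule 𝕜 A) (m : ℕ∞) : Submodule 𝕜 A :=
  ⨆ i ∈ {i : ℕ | (i : ℕ∞) < m}, 𝒜 i

open Classical in
/-- Truncation of `c ∈ A` to its components of degree `< m` (the action of `c`
on `A^{<m} = A/(⊕_{i ≥ m} A_i)`). -/
noncomputable def truncA (𝒜 : ℕ → Submodule 𝕜 A) [GradedAlgebra 𝒜] (m : ℕ∞) (c : A) : A :=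
  ∑ i ∈ (DirectSum.decompose 𝒜 c).support.filter (fun i : ℕ => (i : ℕ∞) < m),
    (DirectSum.decompose 𝒜 c i : A)

open Classical in
/-- The invariant `m_X` attached to a Gröbner basis `G` :
`m_X = min { v(lc g) | g ∈ G, lp g ∣ X }`, and `m_X = a` if no `lp g` divides `X`. -/
noncomputable def mXv [LinearOrder (Mon n r)] (𝒜 : ℕ → Submodule 𝕜 A) [GradedAlgebra 𝒜]
    (a : ℕ∞) (G : Finset (Lmod A n r)) (X : Mon n r) : ℕ∞ :=
  if ∃ g ∈ G, lpDvdMon g X then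
    sInf {m : ℕ∞ | ∃ g ∈ G, lpDvdMon g X ∧ m = valA 𝒜 a (lcL g)}
  else a

end Graded

section Tdvr

/-- `f ∈ I·L`, coefficientwise. -/
def memFil (I : Ideal A) (f : Lmod A n r) : Prop := ∀ X : Mon n r, coeffL f X ∈ I

/-- The symbol map `L → gr(L)` in degree `i`, applied coefficientwise
(`s = sym i : A → gr(A)` being the degree-`i` symbol map of the ring). -/
noncomputable def symL (s : A → B) (f : Lmod A n r) : Lmod B n r := fun l =>
  ∑ d ∈ (f l).support, MvPolynomial.monomial d (s (MvPolynomial.coeff d (f l)))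

/-- The associated graded module `gr(M) ⊆ gr(L)` of a submodule `M ⊆ L`, with
respect to the `I`-adic filtration: the `gr(R)`-submodule generated by the
symbols of the elements of `M ∩ I^i·L`, for all `i`. -/
noncomputable def grSub (I : Ideal A) (sym : ℕ → A → B)
    (M : Submodule (MvPolynomial (Fin n) A) (Lmod A n r)) :
    Submodule (MvPolynomial (Fin n) B) (Lmod B n r) :=
  Submodule.span (MvPolynomial (Fin n) B)
    {h : Lmod B n r | ∃ i : ℕ, ∃ f ∈ M, memFil (I ^ i) f ∧ h = symL (sym i) f}

end Tdvr

/-! Over a Noetherian ring the free module `L` is Noetherian, so the leading terms of the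
elements of `M` generate a finitely generated submodule, already spanned by the leading terms
of finitely many of them; these form a Gröbner basis. -/

theorem Submodule.exists_finset_subset_span_image_eq {R M α : Type*} [Semiring R]
    [AddCommMonoid M] [Module R M] [IsNoetherian R M] (f : α → M) (s : Set α) :
    ∃ t : Finset α, ↑t ⊆ s ∧ span R (f '' t) = span R (f '' s) := by
  classical
  obtain ⟨T, hTs, hspan⟩ :=
    (fg_span_iff_fg_span_finset_subset (f '' s)).1 <|
      IsNoetherian.noetherian (span R (f '' s))
  obtain ⟨t, hts, rfl⟩ := Finset.subset_set_image_iff.1 hTs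
  exact ⟨t, hts, by rw [hspan, Finset.coe_image]⟩

theorem LtS_eq_span_image_ltL {A : Type*} [CommRing A] {n r : ℕ} [LinearOrder (Mon n r)]
    {S : Set (Lmod A n r)} (hS : ∀ f ∈ S, f ≠ 0) :
    LtS S = Submodule.span (MvPolynomial (Fin n) A) (ltL '' S) := by
  rw [LtS, Set.sep_eq_self_iff_mem_true.2 hS]

theorem exists_groebner_basis_general {A : Type*} [CommRing A] [IsNoetherianRing A]
    {n r : ℕ} [LinearOrder (Mon n r)]
    (M : Submodule (MvPolynomial (Fin n) A) (Lmod A n r)) :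
    ∃ G : Finset (Lmod A n r),
      (G : Set (Lmod A n r)) ⊆ (M : Set (Lmod A n r)) \ {0} ∧
      LtS (G : Set (Lmod A n r)) = LtS (M : Set (Lmod A n r)) := by
  obtain ⟨G, hGM, hspan⟩ := Submodule.exists_finset_subset_span_image_eq
    (R := MvPolynomial (Fin n) A) ltL {f ∈ (M : Set (Lmod A n r)) | f ≠ 0}
  refine ⟨G, fun g hg => hGM hg, ?_⟩
  rw [LtS_eq_span_image_ltL fun g hg => (hGM hg).2, hspan, LtS]

/-- over a Noetherian coefficient ring, every nonzero submodule
`M ⊆ L` has a Gröbner basis: a finite `G ⊆ M ∖ {0}` with `Lt G = Lt M`. -/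
theorem exists_groebner_basis {A : Type*} [CommRing A] [IsNoetherianRing A]
    {n r : ℕ} (hr : 1 ≤ r) [LinearOrder (Mon n r)] (hto : IsTermOrder n r)
    (M : Submodule (MvPolynomial (Fin n) A) (Lmod A n r)) (hM : M ≠ ⊥) :
    ∃ G : Finset (Lmod A n r),
      (G : Set (Lmod A n r)) ⊆ (M : Set (Lmod A n r)) \ {0} ∧
      LtS (G : Set (Lmod A n r)) = LtS (M : Set (Lmod A n r)) :=
  exists_groebner_basis_general M
end

section
/- Every Gröbner basis G for a nonzero R-submodule M of L contains a subset which is a minimal Gröbner basis for M. -/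
open MvPolynomial

variable {A B : Type*} [CommRing A] [CommRing B] {n r : ℕ}

/-!
If some `g ∈ G` reduces strictly modulo `G ∖ {g}`, then already the first reduction step writes
`lt g` as a combination of leading terms of `G ∖ {g}`, so `Lt (G ∖ {g}) = Lt G` and `G ∖ {g}` is
still a Gröbner basis for `M`. As `G` is finite, discarding such elements one at a time ends in a
minimal Gröbner basis.
-/

section LeadingTerms

variable {A : Type*} [CommRing A] {n r : ℕ} [LinearOrder (Mon n r)]

@[simp]
lemma ltL_zero : ltL (0 : Lmod A n r) = 0 := by
  have h : suppL (0 : Lmod A n r) = ∅ := by ext X; simp [suppL]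
  simp [ltL, h]

lemma ltL_mem_LtS {S : Set (Lmod A n r)} {f : Lmod A n r} (hf : f ∈ S) : ltL f ∈ LtS S := by
  by_cases h0 : f = 0
  · simp [h0]
  · exact Submodule.subset_span ⟨f, ⟨hf, h0⟩, rfl⟩

lemma LtS_le_iff {S T : Set (Lmod A n r)} : LtS S ≤ LtS T ↔ ∀ f ∈ S, ltL f ∈ LtS T :=
  ⟨fun hST _ hf => hST (ltL_mem_LtS hf),
    fun h => Submodule.span_le.2 <| by rintro _ ⟨f, ⟨hf, -⟩, rfl⟩; exact h f hf⟩

lemma LtS_mono {S T : Set (Lmod A n r)} (hST : S ⊆ T) : LtS S ≤ LtS T :=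
  LtS_le_iff.2 fun _ hf => ltL_mem_LtS (hST hf)

lemma Step.ltL_mem_LtS {F : Finset (Lmod A n r)} {f h : Lmod A n r} (hs : Step F f h) :
    ltL f ∈ LtS (F : Set (Lmod A n r)) := by
  obtain ⟨a, x, -, -, hlt⟩ := hs
  rw [hlt]
  exact Submodule.sum_mem _ fun g hg => Submodule.smul_of_tower_mem _ _ <|
    Submodule.smul_mem _ _ (_root_.ltL_mem_LtS (Finset.mem_coe.2 hg))

lemma Red.ltL_mem_LtS {F : Finset (Lmod A n r)} {f h : Lmod A n r} (hred : Red F f h) :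
    ltL f ∈ LtS (F : Set (Lmod A n r)) :=
  (Relation.TransGen.head'_iff.1 hred).choose_spec.1.ltL_mem_LtS

lemma IsGB.erase_of_red [DecidableEq (Lmod A n r)] {G : Finset (Lmod A n r)}
    {M : Submodule (MvPolynomial (Fin n) A) (Lmod A n r)} (hGB : IsGB G M)
    {g h : Lmod A n r} (hred : Red (G.erase g) g h) : IsGB (G.erase g) M := by
  refine ⟨(Finset.coe_subset.2 (G.erase_subset g)).trans hGB.1, ?_⟩
  rw [← hGB.2]
  refine le_antisymm (LtS_mono (Finset.coe_subset.2 (G.erase_subset g))) (LtS_le_iff.2 ?_)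
  intro f hf
  by_cases hfg : f = g
  · exact hfg ▸ hred.ltL_mem_LtS
  · exact ltL_mem_LtS (Finset.mem_coe.2 (Finset.mem_erase.2 ⟨hfg, hf⟩))

end LeadingTerms

theorem exists_minimal_groebner_subset_general {A : Type*} [CommRing A]
    {n r : ℕ} [LinearOrder (Mon n r)]
    (M : Submodule (MvPolynomial (Fin n) A) (Lmod A n r))
    (G : Finset (Lmod A n r)) (hGB : IsGB G M) :
    ∃ G' : Finset (Lmod A n r), G' ⊆ G ∧ IsGB G' M ∧ IsMinimalGB G' := by
  classical
  induction G using Finset.strongInduction with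
  | H G ih =>
    by_cases hmin : IsMinimalGB G
    · exact ⟨G, subset_rfl, hGB, hmin⟩
    obtain ⟨g, hg, h, hred, -⟩ : ∃ g ∈ G, ∃ h, StrictRed (G.erase g) g h := by
      simpa [IsMinimalGB] using hmin
    obtain ⟨G', hG'G, hG'⟩ := ih _ (Finset.erase_ssubset hg) (hGB.erase_of_red hred)
    exact ⟨G', hG'G.trans (G.erase_subset g), hG'⟩

/-- every Gröbner basis `G` for a nonzero submodule `M ⊆ L`
contains a minimal Gröbner basis for `M`. -/
theorem exists_minimal_groebner_subset {A : Type*} [CommRing A]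
    {n r : ℕ} (hr : 1 ≤ r) [LinearOrder (Mon n r)] (hto : IsTermOrder n r)
    (M : Submodule (MvPolynomial (Fin n) A) (Lmod A n r)) (hM : M ≠ ⊥)
    (G : Finset (Lmod A n r)) (hGB : IsGB G M) :
    ∃ G' : Finset (Lmod A n r), G' ⊆ G ∧ IsGB G' M ∧ IsMinimalGB G' :=
  exists_minimal_groebner_subset_general M G hGB
end
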